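/- Let G be a finite 4-central powerful 2-group that is d-generated. Then there exists a normal subgroup N of G with index |G : N| ≤ 2^d such that N² = G², N is powerful, and N is 4*-central, i.e. Ω₂(N) ≤ Z(N) and Ω₂(N) ≅ (ℤ/4ℤ)^s for some s (equivalently, every element of order dividing 2 in N lies in N²). -/

import Mathlib

/-- `subPow N m` is the subgroup generated by the `m`-th powers of elements of `N`. -/
def subPow {G : Type*} [Group G] (N : Subgroup G) (m : ℕ) : Subgroup G :=
  Subgroup.closure {x : G | ∃ n ∈ N, n ^ m = x}

/-- `Omega₂` of a group: the subgroup generated by elements `g` with `g⁴ = 1`. -/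
def Omega2 (G : Type*) [Group G] : Subgroup G :=
  Subgroup.closure {g : G | g ^ 4 = 1}

/-!
Two facts about a powerful `2`-group `G` drive the proof. First, `[℧ᵢ(G), G] ≤ ℧ᵢ₊₂(G)` for
all `i`, by induction on `i`. For the step put `H = [℧ᵢ₊₁(G), G]`: modulo `℧ᵢ₊₃(G) H² [H, G]`
the subgroup `H` is central of exponent `2`, and the identity `[s², w] = [s, w]²` (valid when
`[s, w]` commutes with `s`) together with the induction hypothesis kills it. A Frattini-type
argument (`K ≤ K² [K, G]` forces `K = 1` in a `2`-group) then lifts `H ≤ ℧ᵢ₊₃(G) H² [H, G]` to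
`H ≤ ℧ᵢ₊₃(G)`. Consequently every `w ∈ G²` is a square: absorbing commutators, `w = x² z` with
`z` in ever deeper `℧ₖ(G)`.

Second, in a `4`-central group the involutions form a central elementary abelian subgroup `Ω₁`.
Take `N ≥ G²` maximal with `N ∩ Ω₁ ≤ G²`; then `G = N Ω₁`. Writing `g = n z` with `z` a central
involution gives `N² = G²` and `N⁴ = G⁴`, so `N` is powerful, and every involution of `N` lies in
`G² = N²`, hence is the square of an element of order `4` of `N`. By the structure theorem, an
abelian group of exponent `4` whose involutions are squares is a power of `ℤ/4`.
-/

open Subgroup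
open scoped commutatorElement

section

variable {G G' : Type*} [Group G] [Group G']

theorem pow_mem_subPow {N : Subgroup G} {n : G} (hn : n ∈ N) (m : ℕ) : n ^ m ∈ subPow N m :=
  subset_closure ⟨n, hn, rfl⟩

theorem subPow_mono {N K : Subgroup G} (h : N ≤ K) (m : ℕ) : subPow N m ≤ subPow K m :=
  closure_mono fun _ ⟨n, hn, hx⟩ => ⟨n, h hn, hx⟩

theorem map_subPow (f : G →* G') (N : Subgroup G) (m : ℕ) :
    (subPow N m).map f = subPow (N.map f) m := by
  rw [subPow, subPow, MonoidHom.map_closure]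
  congr 1
  ext y
  simp

instance subPow_normal (N : Subgroup G) [hN : N.Normal] (m : ℕ) : (subPow N m).Normal := by
  refine ⟨fun x hx g => ?_⟩
  induction hx using closure_induction with
  | mem _ hx =>
    obtain ⟨n, hn, rfl⟩ := hx
    exact subset_closure ⟨g * n * g⁻¹, hN.conj_mem n hn g, conj_pow⟩
  | one => simp
  | mul x y _ _ hx hy => simpa [mul_assoc] using mul_mem hx hy
  | inv x _ hx => simpa [mul_assoc] using inv_mem hx

theorem pow_eq_one_of_mem_closure {S : Set G} (hS : S ⊆ center G) {m : ℕ}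
    (hm : ∀ s ∈ S, s ^ m = 1) {x : G} (hx : x ∈ closure S) : x ^ m = 1 := by
  have hcen : closure S ≤ center G := (closure_le _).2 hS
  induction hx using closure_induction with
  | mem s hs => exact hm s hs
  | one => exact one_pow m
  | mul x y hx _ hxm hym =>
    rw [(Commute.symm (mem_center_iff.1 (hcen hx) y)).mul_pow, hxm, hym, one_mul]
  | inv x _ hxm => rw [inv_pow, hxm, inv_one]

theorem mem_closure_pow_eq_one_iff {m : ℕ} (h : closure {g : G | g ^ m = 1} ≤ center G)
    {x : G} : x ∈ closure {g : G | g ^ m = 1} ↔ x ^ m = 1 :=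
  ⟨pow_eq_one_of_mem_closure (subset_closure.trans h) fun _ hs => hs, fun hx => subset_closure hx⟩

/-- `agemo G i` is `℧ᵢ(G) = G^(2^i)`. -/
def agemo (G : Type*) [Group G] (i : ℕ) : Subgroup G := subPow ⊤ (2 ^ i)

/-- For `p = 2` powerfulness asks `[G, G] ≤ G⁴`, not `[G, G] ≤ G²`. -/
def IsPowerful (G : Type*) [Group G] : Prop := ⁅(⊤ : Subgroup G), ⊤⁆ ≤ agemo G 2

theorem pow_mem_agemo (x : G) (i : ℕ) : x ^ 2 ^ i ∈ agemo G i := pow_mem_subPow (mem_top x) _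

theorem pow_two_pow_succ (x : G) (i : ℕ) : x ^ 2 ^ (i + 1) = (x ^ 2 ^ i) ^ 2 := by
  rw [pow_succ, pow_mul]

theorem agemo_zero : agemo G 0 = ⊤ :=
  eq_top_iff.2 fun x _ => by simpa using pow_mem_agemo x 0

theorem agemo_succ_le (i : ℕ) : agemo G (i + 1) ≤ agemo G i := by
  refine (closure_le _).2 ?_
  rintro _ ⟨x, -, rfl⟩
  rw [pow_succ', pow_mul]
  exact pow_mem_agemo _ i

instance agemo_normal (i : ℕ) : (agemo G i).Normal := subPow_normal ⊤ _

theorem map_agemo {f : G →* G'} (hf : Function.Surjective f) (i : ℕ) :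
    (agemo G i).map f = agemo G' i := by
  rw [agemo, map_subPow, map_top_of_surjective f hf, agemo]

theorem IsPowerful.of_surjective (hP : IsPowerful G) {f : G →* G'}
    (hf : Function.Surjective f) : IsPowerful G' := by
  rw [IsPowerful, ← map_top_of_surjective f hf, ← map_commutator, ← map_agemo hf]
  exact map_mono hP

theorem exists_agemo_eq_bot [Finite G] (hG : IsPGroup 2 G) : ∃ n, agemo G n = ⊥ := by
  obtain ⟨n, hn⟩ := IsPGroup.iff_card.mp hG
  refine ⟨n, eq_bot_iff.2 <| (closure_le _).2 ?_⟩
  rintro _ ⟨x, -, rfl⟩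
  rw [SetLike.mem_coe, mem_bot, ← hn]
  exact pow_card_eq_one'

theorem eq_bot_of_le_commutator_top [Group.IsNilpotent G] {K : Subgroup G} (h : K ≤ ⁅K, ⊤⁆) :
    K = ⊥ := by
  obtain ⟨n, hn⟩ := Subgroup.nilpotent_iff_lowerCentralSeries.mp ‹_›
  have hle : ∀ i, K ≤ (⊤ : Subgroup G).lowerCentralSeries i := by
    intro i
    induction i with
    | zero => exact le_top
    | succ i ih => exact h.trans (commutator_mono ih le_top)
  exact eq_bot_iff.2 (hn ▸ hle n)

theorem eq_one_of_pow_two_pow_eq_one {H : Type*} [Monoid H]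
    (hinj : Function.Injective fun y : H => y ^ 2) {y : H} {n : ℕ} (hy : y ^ 2 ^ n = 1) :
    y = 1 := by
  induction n with
  | zero => simpa using hy
  | succ n ih => exact ih (hinj (by simpa [pow_succ, pow_mul] using hy))

theorem eq_bot_of_le_center_of_le_subPow_two [Finite G] {K : Subgroup G} (hK : IsPGroup 2 K)
    (hc : K ≤ center G) (h : K ≤ subPow K 2) : K = ⊥ := by
  have hsq : ∀ x ∈ subPow K 2, ∃ y ∈ K, y ^ 2 = x := by
    intro x hx
    induction hx using closure_induction with
    | mem x hx => exact hx
    | one => exact ⟨1, one_mem K, one_pow 2⟩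
    | mul x y _ _ hx hy =>
      obtain ⟨a, ha, rfl⟩ := hx
      obtain ⟨b, hb, rfl⟩ := hy
      exact ⟨a * b, mul_mem ha hb, (Commute.symm (mem_center_iff.1 (hc ha) b)).mul_pow 2⟩
    | inv x _ hx =>
      obtain ⟨a, ha, rfl⟩ := hx
      exact ⟨a⁻¹, inv_mem ha, inv_pow a 2⟩
  have hsurj : Function.Surjective fun y : K => y ^ 2 := fun k => by
    obtain ⟨y, hy, hyk⟩ := hsq k (h k.2)
    exact ⟨⟨y, hy⟩, Subtype.ext hyk⟩
  refine eq_bot_iff.2 fun k hk => ?_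
  obtain ⟨n, hn⟩ := hK ⟨k, hk⟩
  simpa using congrArg Subtype.val
    (eq_one_of_pow_two_pow_eq_one (Finite.injective_iff_surjective.2 hsurj) hn)

theorem eq_bot_of_le_subPow_two_sup_commutator [Finite G] (hG : IsPGroup 2 G) {K : Subgroup G}
    [K.Normal] (h : K ≤ subPow K 2 ⊔ ⁅K, ⊤⁆) : K = ⊥ := by
  have : Group.IsNilpotent G := hG.isNilpotent
  refine eq_bot_of_le_commutator_top ?_
  set π := QuotientGroup.mk' (⁅K, ⊤⁆ : Subgroup G)
  have hπ : Function.Surjective π := QuotientGroup.mk'_surjective _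
  have hker : (⁅K, ⊤⁆ : Subgroup G).map π = ⊥ := by
    rw [Subgroup.map_eq_bot_iff, QuotientGroup.ker_mk']
  suffices K.map π = ⊥ by rwa [Subgroup.map_eq_bot_iff, QuotientGroup.ker_mk'] at this
  refine eq_bot_of_le_center_of_le_subPow_two ((hG.to_quotient _).to_subgroup _) ?_ ?_
  · rw [← centralizer_univ, ← coe_top, ← commutator_eq_bot_iff_le_centralizer,
      ← map_top_of_surjective π hπ, ← map_commutator, hker]
  · calc K.map π ≤ (subPow K 2 ⊔ ⁅K, ⊤⁆).map π := map_mono h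
      _ = subPow (K.map π) 2 := by rw [Subgroup.map_sup, map_subPow, hker, sup_bot_eq]

theorem le_of_le_sup_subPow_two_sup_commutator [Finite G] (hG : IsPGroup 2 G)
    {H L : Subgroup G} [hH : H.Normal] [L.Normal] (h : H ≤ L ⊔ subPow H 2 ⊔ ⁅H, ⊤⁆) :
    H ≤ L := by
  set π := QuotientGroup.mk' L
  have hπ : Function.Surjective π := QuotientGroup.mk'_surjective _
  have hker : L.map π = ⊥ := by rw [Subgroup.map_eq_bot_iff, QuotientGroup.ker_mk']
  suffices H.map π = ⊥ by rwa [Subgroup.map_eq_bot_iff, QuotientGroup.ker_mk'] at this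
  have := hH.map π hπ
  refine eq_bot_of_le_subPow_two_sup_commutator (hG.to_quotient L) ?_
  calc H.map π ≤ (L ⊔ subPow H 2 ⊔ ⁅H, ⊤⁆).map π := map_mono h
    _ = subPow (H.map π) 2 ⊔ ⁅H.map π, ⊤⁆ := by
      rw [Subgroup.map_sup, Subgroup.map_sup, hker, map_subPow, map_commutator,
        map_top_of_surjective π hπ, bot_sup_eq]

theorem commutatorElement_sq_left {s w : G} (h : Commute s ⁅s, w⁆) :
    ⁅s ^ 2, w⁆ = ⁅s, w⁆ ^ 2 :=
  calc ⁅s ^ 2, w⁆ = s * ⁅s, w⁆ * s⁻¹ * ⁅s, w⁆ := by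
        simp only [commutatorElement_def, pow_two]; group
    _ = ⁅s, w⁆ ^ 2 := by rw [h.eq, mul_inv_cancel_right, pow_two]

theorem sq_mem_center {s : G} (h : ∀ w, ⁅s, w⁆ ∈ center G ∧ ⁅s, w⁆ ^ 2 = 1) :
    s ^ 2 ∈ center G := by
  refine mem_center_iff.2 fun w => ?_
  obtain ⟨hc, h2⟩ := h w
  have : ⁅s ^ 2, w⁆ = 1 := by
    rw [commutatorElement_sq_left (mem_center_iff.1 hc s), h2]
  exact (commutatorElement_eq_one_iff_commute.1 this).eq.symm

theorem commutator_agemo_succ_eq_bot {j : ℕ} (hj : ⁅agemo G j, ⊤⁆ ≤ agemo G (j + 2))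
    (h3 : agemo G (j + 3) = ⊥) (h2 : subPow ⁅agemo G (j + 1), (⊤ : Subgroup G)⁆ 2 = ⊥)
    (hc : ⁅⁅agemo G (j + 1), (⊤ : Subgroup G)⁆, (⊤ : Subgroup G)⁆ = ⊥) :
    ⁅agemo G (j + 1), (⊤ : Subgroup G)⁆ = ⊥ := by
  set H := ⁅agemo G (j + 1), (⊤ : Subgroup G)⁆
  have hHc : H ≤ center G := by
    rwa [← centralizer_univ, ← coe_top, ← commutator_eq_bot_iff_le_centralizer]
  have hH2 : ∀ c ∈ H, c ^ 2 = 1 := fun c hc => by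
    simpa [h2] using pow_mem_subPow hc 2
  have hS : {x | ∃ y ∈ (⊤ : Subgroup G), y ^ 2 ^ (j + 2) = x} ⊆ center G := by
    rintro _ ⟨y, -, rfl⟩
    rw [pow_two_pow_succ]
    exact sq_mem_center fun w =>
      have hmem := commutator_mem_commutator (pow_mem_agemo y (j + 1)) (mem_top w)
      ⟨hHc hmem, hH2 _ hmem⟩
  have hS2 : ∀ g ∈ agemo G (j + 2), g ^ 2 = 1 := fun g hg => by
    refine pow_eq_one_of_mem_closure hS ?_ hg
    rintro _ ⟨y, -, rfl⟩
    rw [← pow_two_pow_succ, ← mem_bot, ← h3]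
    exact pow_mem_agemo y _
  have hB : agemo G (j + 1) ≤ center G := by
    refine (closure_le _).2 ?_
    rintro _ ⟨x, -, rfl⟩
    rw [pow_two_pow_succ]
    exact sq_mem_center fun w =>
      have hmem := hj (commutator_mem_commutator (pow_mem_agemo x j) (mem_top w))
      ⟨(closure_le _).2 hS hmem, hS2 _ hmem⟩
  rwa [commutator_eq_bot_iff_le_centralizer, coe_top, centralizer_univ]

theorem commutator_agemo_le [Finite G] (hG : IsPGroup 2 G) (hP : IsPowerful G) (j : ℕ) :
    ⁅agemo G j, ⊤⁆ ≤ agemo G (j + 2) := by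
  induction j generalizing G with
  | zero => rwa [agemo_zero]
  | succ j ih =>
    set H := ⁅agemo G (j + 1), (⊤ : Subgroup G)⁆
    set V := agemo G (j + 3) ⊔ subPow H 2 ⊔ ⁅H, ⊤⁆
    set π := QuotientGroup.mk' V
    have hπ : Function.Surjective π := QuotientGroup.mk'_surjective V
    have hV : ∀ K ≤ V, K.map π = ⊥ := fun K hK => by
      rwa [Subgroup.map_eq_bot_iff, QuotientGroup.ker_mk']
    have hH : H.map π = ⁅agemo (G ⧸ V) (j + 1), ⊤⁆ := by
      rw [map_commutator, map_agemo hπ, map_top_of_surjective π hπ]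
    have key := commutator_agemo_succ_eq_bot (ih (hG.to_quotient V) (hP.of_surjective hπ))
      (by rw [← map_agemo hπ]; exact hV _ (le_sup_left.trans le_sup_left))
      (by rw [← hH, ← map_subPow]; exact hV _ (le_sup_right.trans le_sup_left))
      (by rw [← hH, ← map_top_of_surjective π hπ, ← map_commutator]; exact hV _ le_sup_right)
    rw [← hH, Subgroup.map_eq_bot_iff, QuotientGroup.ker_mk'] at key
    exact le_of_le_sup_subPow_two_sup_commutator hG key

section Squares

variable {i : ℕ} (hcomm : ∀ i, ⁅agemo G i, ⊤⁆ ≤ agemo G (i + 2))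
include hcomm

theorem exists_sq_mul_sq_eq {v : G} (hv : v ∈ agemo G i) (x : G) :
    ∃ c ∈ agemo G (i + 2), x ^ 2 * v ^ 2 = (x * v) ^ 2 * c := by
  refine ⟨v⁻¹ * ⁅x⁻¹, v⁻¹⁆ * v, ?_, by simp only [commutatorElement_def, pow_two]; group⟩
  have h : ⁅v⁻¹, x⁻¹⁆ ∈ agemo G (i + 2) :=
    hcomm i (commutator_mem_commutator (inv_mem hv) (mem_top _))
  rw [← commutatorElement_inv] at h
  simpa using (agemo_normal (i + 2)).conj_mem' _ (inv_mem h) v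

theorem exists_sq_mul_of_mem_agemo_succ {u : G} (hu : u ∈ agemo G (i + 1)) :
    ∃ v ∈ agemo G i, ∃ z ∈ agemo G (i + 2), u = v ^ 2 * z := by
  have hN := agemo_normal (G := G) (i + 2)
  induction hu using closure_induction with
  | mem _ hx =>
    obtain ⟨x, -, rfl⟩ := hx
    exact ⟨_, pow_mem_agemo x i, 1, one_mem _, by rw [mul_one, pow_two_pow_succ]⟩
  | one => exact ⟨1, one_mem _, 1, one_mem _, by simp⟩
  | mul _ _ _ _ h₁ h₂ =>
    obtain ⟨v₁, hv₁, z₁, hz₁, rfl⟩ := h₁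
    obtain ⟨v₂, hv₂, z₂, hz₂, rfl⟩ := h₂
    obtain ⟨c, hc, hsq⟩ := exists_sq_mul_sq_eq hcomm hv₂ v₁
    refine ⟨v₁ * v₂, mul_mem hv₁ hv₂, c * ((v₂ ^ 2)⁻¹ * z₁ * v₂ ^ 2) * z₂,
      mul_mem (mul_mem hc (hN.conj_mem' _ hz₁ _)) hz₂, ?_⟩
    calc v₁ ^ 2 * z₁ * (v₂ ^ 2 * z₂)
        = v₁ ^ 2 * v₂ ^ 2 * ((v₂ ^ 2)⁻¹ * z₁ * v₂ ^ 2) * z₂ := by group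
      _ = _ := by rw [hsq]; group
  | inv _ _ h =>
    obtain ⟨v, hv, z, hz, rfl⟩ := h
    refine ⟨v⁻¹, inv_mem hv, v ^ 2 * z⁻¹ * (v ^ 2)⁻¹, hN.conj_mem _ (inv_mem hz) _, ?_⟩
    group

theorem exists_sq_mul_of_mem_agemo_one {w : G} (hw : w ∈ agemo G 1) (k : ℕ) :
    ∃ x, ∃ z ∈ agemo G (k + 1), w = x ^ 2 * z := by
  induction k with
  | zero => exact ⟨1, w, hw, by simp⟩
  | succ k ih =>
    obtain ⟨x, z, hz, rfl⟩ := ih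
    obtain ⟨v, hv, z', hz', rfl⟩ := exists_sq_mul_of_mem_agemo_succ hcomm hz
    obtain ⟨c, hc, hsq⟩ := exists_sq_mul_sq_eq hcomm hv x
    exact ⟨x * v, c * z', mul_mem hc hz', by rw [← mul_assoc, hsq, mul_assoc]⟩

end Squares

theorem IsPowerful.exists_sq_eq [Finite G] (hG : IsPGroup 2 G) (hP : IsPowerful G) {w : G}
    (hw : w ∈ subPow ⊤ 2) : ∃ x, x ^ 2 = w := by
  obtain ⟨n, hn⟩ := exists_agemo_eq_bot hG
  obtain ⟨x, z, hz, rfl⟩ := exists_sq_mul_of_mem_agemo_one (commutator_agemo_le hG hP) hw n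
  have hz1 : z = 1 := by
    rw [← mem_bot, ← hn]
    exact agemo_succ_le n hz
  exact ⟨x, by rw [hz1, mul_one]⟩

theorem eq_four_of_four_eq_zero {k : ℕ} (hk : 1 < k) (h4 : (4 : ZMod k) = 0)
    (hsq : (2 : ZMod k) = 0 → ∃ b : ZMod k, 2 * b = 1) : k = 4 := by
  have hdvd : k ∣ 4 := by
    exact_mod_cast (ZMod.natCast_eq_zero_iff _ _).1 (by exact_mod_cast h4)
  have hle := Nat.le_of_dvd (by norm_num) hdvd
  interval_cases k
  · obtain ⟨b, hb⟩ := hsq rfl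
    revert b; decide
  · norm_num at hdvd
  · rfl

/-- The cyclic factors of `M` have order dividing `4`; a factor of order `2` would contain an
involution that is not a square. -/
theorem exists_mulEquiv_pi_zmod_four {M : Type*} [CommGroup M] [Finite M]
    (h4 : ∀ x : M, x ^ 4 = 1) (hsq : ∀ x : M, x ^ 2 = 1 → ∃ y, y ^ 2 = x) :
    ∃ s, Nonempty (M ≃* (Fin s → Multiplicative (ZMod 4))) := by
  classical
  obtain ⟨ι, _, n, hn1, ⟨e⟩⟩ := CommGroup.equiv_prod_multiplicative_zmod_of_finite M
  have hn : ∀ i, n i = 4 := by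
    intro i
    set x := e.symm (Pi.mulSingle i (Multiplicative.ofAdd 1))
    refine eq_four_of_four_eq_zero (hn1 i) ?_ fun h2 => ?_
    · have := congrArg (fun y => Multiplicative.toAdd (e y i)) (h4 x)
      simpa [x, ← Pi.mulSingle_pow] using this
    · have hx : x ^ 2 = 1 := by
        rw [← map_pow, ← Pi.mulSingle_pow, ← ofAdd_nsmul, nsmul_eq_mul, mul_one]
        simp [h2]
      obtain ⟨y, hy⟩ := hsq x hx
      refine ⟨Multiplicative.toAdd (e y i), ?_⟩
      have := congrArg (fun y => Multiplicative.toAdd (e y i)) hy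
      simpa [x, two_mul] using this
  exact ⟨Fintype.card ι, ⟨e.trans <|
    (MulEquiv.piCongrRight fun i => (ZMod.ringEquivCongr (hn i)).toAddEquiv.toMultiplicative).trans
      (MulEquiv.arrowCongr (Fintype.equivFin ι) (MulEquiv.refl _))⟩⟩

theorem closure_sq_eq_one_le_Omega2 : closure {g : G | g ^ 2 = 1} ≤ Omega2 G :=
  closure_mono fun g (hg : g ^ 2 = 1) =>
    show g ^ 4 = 1 by rw [show 4 = 2 * 2 from rfl, pow_mul, hg, one_pow]

theorem Omega2_subgroup_le_center (h : Omega2 G ≤ center G) (N : Subgroup G) :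
    Omega2 N ≤ center N := by
  refine (closure_le _).2 fun n hn => mem_center_iff.2 fun m => Subtype.ext ?_
  have hn4 : (n : G) ^ 4 = 1 := by simpa using congrArg Subtype.val (show n ^ 4 = 1 from hn)
  exact mem_center_iff.1 (h (subset_closure hn4)) m

theorem exists_mulEquiv_Omega2 [Finite G] (hc : Omega2 G ≤ center G)
    (hsq : ∀ x : G, x ^ 2 = 1 → ∃ y, y ^ 2 = x) :
    ∃ s, Nonempty (Omega2 G ≃* (Fin s → Multiplicative (ZMod 4))) := by
  let : CommGroup (Omega2 G) :=
    { mul_comm := fun a b => Subtype.ext (mem_center_iff.1 (hc b.2) a) }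
  have hmem : ∀ x : G, x ∈ Omega2 G ↔ x ^ 4 = 1 := fun x => mem_closure_pow_eq_one_iff hc
  refine exists_mulEquiv_pi_zmod_four (fun x => Subtype.ext ((hmem x).1 x.2)) fun x hx => ?_
  have hx2 : (x : G) ^ 2 = 1 := by simpa using congrArg Subtype.val hx
  obtain ⟨y, hy⟩ := hsq x hx2
  have hy4 : y ^ 4 = 1 := by rw [show 4 = 2 * 2 from rfl, pow_mul, hy, hx2]
  exact ⟨⟨y, (hmem y).2 hy4⟩, Subtype.ext hy⟩

theorem normal_of_forall_sq_mem {N : Subgroup G} (h : ∀ g : G, g ^ 2 ∈ N) : N.Normal := by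
  refine ⟨fun n hn g => ?_⟩
  have hconj : g * n * g⁻¹ = (g * n) ^ 2 * n⁻¹ * (g ^ 2)⁻¹ := by simp only [pow_two]; group
  rw [hconj]
  exact mul_mem (mul_mem (h _) (inv_mem hn)) (inv_mem (h g))

theorem exists_sup_eq_top_inf_le [Finite G] {C : Subgroup G} (hC : ∀ g : G, g ^ 2 ∈ C)
    (D : Subgroup G) : ∃ N, C ≤ N ∧ N ⊔ D = ⊤ ∧ N ⊓ D ≤ C := by
  have : Finite (Subgroup G) := Finite.of_injective _ SetLike.coe_injective
  obtain ⟨N, -, hmax⟩ := Finite.exists_le_maximal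
    (p := fun N : Subgroup G => C ≤ N ∧ N ⊓ D ≤ C) (a := C) ⟨le_rfl, inf_le_left⟩
  obtain ⟨hCN, hND⟩ := hmax.prop
  refine ⟨N, hCN, eq_top_iff.2 fun g _ => ?_, hND⟩
  by_contra hg
  have hsq : ∀ g : G, g ^ 2 ∈ N := fun g => hCN (hC g)
  have := normal_of_forall_sq_mem hsq
  suffices (N ⊔ zpowers g) ⊓ D ≤ C from
    hg (mem_sup_left (hmax.2 ⟨hCN.trans le_sup_left, this⟩ le_sup_left
      (mem_sup_right (mem_zpowers g))))
  -- `N ⊔ ⟨g⟩ = N ∪ N g` because `g² ∈ N`.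
  rintro _ ⟨hz, hzD⟩
  obtain ⟨n, hn, _, hk, rfl⟩ := mem_sup_of_normal_left.1 hz
  obtain ⟨k, rfl⟩ := mem_zpowers_iff.1 hk
  obtain ⟨t, rfl | rfl⟩ := Int.even_or_odd' k
  · have hgt : g ^ (2 * t) ∈ N := by
      rw [zpow_mul]
      exact zpow_mem (by exact_mod_cast hsq g) t
    exact hND ⟨mul_mem hn hgt, hzD⟩
  · refine absurd ?_ hg
    have hgt : g = (n * (g ^ 2) ^ t)⁻¹ * (n * g ^ (2 * t + 1)) := by
      rw [zpow_add_one, zpow_mul]; group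
    rw [hgt]
    exact mul_mem (mem_sup_left (inv_mem (mul_mem hn (zpow_mem (hsq g) t)))) (mem_sup_right hzD)

theorem exists_subPow_two_le_forall_eq_mul_central [Finite G]
    (hc : closure {g : G | g ^ 2 = 1} ≤ center G) :
    ∃ N : Subgroup G, subPow ⊤ 2 ≤ N ∧
      (∀ g : G, ∃ n ∈ N, ∃ z ∈ center G, z ^ 2 = 1 ∧ g = n * z) ∧
      ∀ g ∈ N, g ^ 2 = 1 → g ∈ subPow ⊤ 2 := by
  obtain ⟨N, hsqN, hNΩ, hNΩsq⟩ :=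
    exists_sup_eq_top_inf_le (fun g => pow_mem_subPow (mem_top g) 2) (closure {g : G | g ^ 2 = 1})
  have := normal_of_forall_sq_mem fun g => hsqN (pow_mem_subPow (mem_top g) 2)
  refine ⟨N, hsqN, fun g => ?_, fun g hg hg2 => hNΩsq ⟨hg, subset_closure hg2⟩⟩
  obtain ⟨n, hn, z, hz, rfl⟩ := mem_sup_of_normal_left.1 (hNΩ ▸ mem_top g)
  exact ⟨n, hn, z, hc hz, (mem_closure_pow_eq_one_iff hc).1 hz, rfl⟩

theorem subPow_eq_subPow_top {N : Subgroup G} {m : ℕ} (hm : 2 ∣ m)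
    (h : ∀ g : G, ∃ n ∈ N, ∃ z ∈ center G, z ^ 2 = 1 ∧ g = n * z) :
    subPow N m = subPow ⊤ m := by
  refine le_antisymm (subPow_mono le_top m) ((closure_le _).2 ?_)
  rintro _ ⟨g, -, rfl⟩
  obtain ⟨n, hn, z, hz, hz2, rfl⟩ := h g
  obtain ⟨k, rfl⟩ := hm
  rw [SetLike.mem_coe, Commute.mul_pow (mem_center_iff.1 hz n), pow_mul z, hz2, one_pow, mul_one]
  exact pow_mem_subPow hn _

theorem index_subPow_two_le [Finite G] {S : Finset G} (hS : closure (S : Set G) = ⊤) :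
    (subPow (⊤ : Subgroup G) 2).index ≤ 2 ^ S.card := by
  set Q := G ⧸ subPow (⊤ : Subgroup G) 2
  have h2 : ∀ q : Q, q ^ 2 = 1 := by
    rintro ⟨g⟩
    exact (QuotientGroup.eq_one_iff _).2 (pow_mem_subPow (mem_top g) 2)
  have hinv : ∀ q : Q, q⁻¹ = q := fun q => inv_eq_of_mul_eq_one_right (by rw [← pow_two, h2])
  let : CommGroup Q :=
    { mul_comm := fun a b => by rw [← hinv (a * b), mul_inv_rev, hinv, hinv] }
  have hrank : Group.rank Q ≤ S.card :=
    (Group.rank_le_of_surjective _ (QuotientGroup.mk'_surjective _)).trans (Group.rank_le hS)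
  rw [index_eq_card]
  calc Nat.card Q ≤ 2 ^ Group.rank Q :=
        Nat.le_of_dvd (by positivity) (card_dvd_exponent_pow_rank' Q h2)
    _ ≤ 2 ^ S.card := Nat.pow_le_pow_right (by norm_num) hrank

end

/-- A `d`-generated finite 4-central powerful 2-group `G` has a normal subgroup `N` of index
at most `2^d` with `N² = G²`, `N` powerful, and `N` 4*-central: `Ω₂(N) ≤ Z(N)`,
`Ω₂(N) ≅ (ℤ/4ℤ)^s`, and every element of order dividing 2 in `N` lies in `N²`. -/
theorem exists_four_star_central_subgroup
    {G : Type*} [Group G] [Fintype G] (hG : IsPGroup 2 G)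
    (d : ℕ) (hgen : ∃ S : Finset G, S.card ≤ d ∧ Subgroup.closure (S : Set G) = ⊤)
    (hpowerful : ⁅(⊤ : Subgroup G), (⊤ : Subgroup G)⁆ ≤ subPow (⊤ : Subgroup G) 4)
    (h4central : Omega2 G ≤ Subgroup.center G) :
    ∃ N : Subgroup G, N.Normal ∧ N.index ≤ 2 ^ d ∧
      subPow N 2 = subPow (⊤ : Subgroup G) 2 ∧
      ⁅N, N⁆ ≤ subPow N 4 ∧
      Omega2 N ≤ Subgroup.center N ∧
      (∃ s : ℕ, Nonempty ((Omega2 N) ≃* (Fin s → Multiplicative (ZMod 4)))) ∧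
      (∀ g ∈ N, g ^ 2 = 1 → g ∈ subPow N 2) := by
  obtain ⟨N, hsqN, hdecomp, hinvol⟩ :=
    exists_subPow_two_le_forall_eq_mul_central (closure_sq_eq_one_le_Omega2.trans h4central)
  have hsq2 : subPow N 2 = subPow ⊤ 2 := subPow_eq_subPow_top dvd_rfl hdecomp
  have hsq4 : subPow N 4 = subPow ⊤ 4 := subPow_eq_subPow_top (by norm_num) hdecomp
  have hΩ : Omega2 N ≤ center N := Omega2_subgroup_le_center h4central N
  obtain ⟨S, hSd, hS⟩ := hgen
  refine ⟨N, normal_of_forall_sq_mem fun g => hsqN (pow_mem_subPow (mem_top g) 2), ?_, hsq2,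
    hsq4 ▸ (commutator_mono le_top le_top).trans hpowerful,
    hΩ, exists_mulEquiv_Omega2 hΩ fun x hx => ?_, fun g hg hg2 => hsq2 ▸ hinvol g hg hg2⟩
  · calc N.index ≤ (subPow ⊤ 2).index := index_antitone hsqN
      _ ≤ 2 ^ S.card := index_subPow_two_le hS
      _ ≤ 2 ^ d := Nat.pow_le_pow_right (by norm_num) hSd
  · obtain ⟨y, hy⟩ := IsPowerful.exists_sq_eq hG hpowerful
      (hinvol x x.2 (by simpa using congrArg Subtype.val hx))
    obtain ⟨n, hn, z, hz, hz2, rfl⟩ := hdecomp y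
    refine ⟨⟨n, hn⟩, Subtype.ext ?_⟩
    rw [← hy, Commute.mul_pow (mem_center_iff.1 hz n), hz2, mul_one]
    rfl
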